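/- Let g = [[a,b],[c,d]] ∈ SL₂(ℍ) with c ≠ 0, acting on the upper half-space model of 5-dimensional real hyperbolic space ℍ⁵_ℝ, and let s > 0 be such that the horoballs H_s = {(z,t) : t ≥ s} and g·H_s have disjoint interiors. Then the hyperbolic distance between H_s and g·H_s equals 2·log|c| + 2·log s. -/

import Mathlib

open Filter Set Real


noncomputable section

/-- Hamilton's quaternion algebra over ℝ. -/
abbrev Hq := Quaternion ℝ

/-- The hyperbolic distance on the upper half-space model
`ℍ⁵_ℝ = ℍ × (0,∞)` of 5-dimensional real hyperbolic space:
`d((z,t),(z',t')) = arcosh(1 + (|z-z'|² + (t-t')²)/(2 t t'))`. -/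
def hypDist5 (p q : Hq × ℝ) : ℝ :=
  Real.log ((1 + (‖p.1 - q.1‖ ^ 2 + (p.2 - q.2) ^ 2) / (2 * p.2 * q.2)) +
    Real.sqrt ((1 + (‖p.1 - q.1‖ ^ 2 + (p.2 - q.2) ^ 2) / (2 * p.2 * q.2)) ^ 2 - 1))

def Qd (p q : Hq × ℝ) : ℝ :=
  1 + (‖p.1 - q.1‖ ^ 2 + (p.2 - q.2) ^ 2) / (2 * p.2 * q.2)

def Bu (x : Hq × ℝ) (w : Hq) : ℝ := (‖x.1 - w‖ ^ 2 + x.2 ^ 2) / x.2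

lemma Qd_one_le {p q : Hq × ℝ} (hp : 0 < p.2) (hq : 0 < q.2) : 1 ≤ Qd p q := by
  have : 0 ≤ (‖p.1 - q.1‖ ^ 2 + (p.2 - q.2) ^ 2) / (2 * p.2 * q.2) := by positivity
  simp only [Qd]; linarith

lemma Bu_pos {x : Hq × ℝ} (hx : 0 < x.2) (w : Hq) : 0 < Bu x w := by
  have : (0:ℝ) < x.2 ^ 2 := by positivity
  have h0 : (0:ℝ) ≤ ‖x.1 - w‖ ^ 2 := by positivity
  exact div_pos (by linarith) hx

lemma Bu_ge {x : Hq × ℝ} (hx : 0 < x.2) (w : Hq) : x.2 ≤ Bu x w := by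
  rw [Bu, le_div_iff₀ hx]
  nlinarith [sq_nonneg ‖x.1 - w‖]

lemma hypDist5_eq (p q : Hq × ℝ) :
    hypDist5 p q = Real.log (Qd p q + Real.sqrt (Qd p q ^ 2 - 1)) := rfl

lemma aux_inj {X Y : ℝ} (hX : 1 ≤ X) (hY : 1 ≤ Y)
    (h : X + Real.sqrt (X ^ 2 - 1) = Y + Real.sqrt (Y ^ 2 - 1)) : X = Y := by
  rcases le_or_gt X Y with hle | hlt
  · rcases eq_or_lt_of_le hle with heq | hlt2
    · exact heq
    · exfalso
      have h1 : Real.sqrt (X ^ 2 - 1) ≤ Real.sqrt (Y ^ 2 - 1) :=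
        Real.sqrt_le_sqrt (by nlinarith)
      linarith
  · exfalso
    have h1 : Real.sqrt (Y ^ 2 - 1) ≤ Real.sqrt (X ^ 2 - 1) :=
      Real.sqrt_le_sqrt (by nlinarith)
    linarith

lemma Qd_pos_arg {X : ℝ} (hX : 1 ≤ X) : 0 < X + Real.sqrt (X ^ 2 - 1) := by
  have : 0 ≤ Real.sqrt (X ^ 2 - 1) := Real.sqrt_nonneg _
  linarith

lemma Qd_eq_of_d_eq {p q p' q' : Hq × ℝ} (hp : 0 < p.2) (hq : 0 < q.2)
    (hp' : 0 < p'.2) (hq' : 0 < q'.2)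
    (h : hypDist5 p q = hypDist5 p' q') : Qd p q = Qd p' q' := by
  have h1 := Qd_one_le hp hq
  have h2 := Qd_one_le hp' hq'
  apply aux_inj h1 h2
  rw [hypDist5_eq, hypDist5_eq] at h
  exact Real.log_injOn_pos (Set.mem_Ioi.mpr (Qd_pos_arg h1))
    (Set.mem_Ioi.mpr (Qd_pos_arg h2)) h

lemma dval {p q : Hq × ℝ} {l : ℝ} (hl : 1 ≤ l) (h : Qd p q = (l + l⁻¹) / 2) :
    hypDist5 p q = Real.log l := by
  have hl0 : 0 < l := by linarith
  rw [hypDist5_eq, h]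
  have h2 : ((l + l⁻¹) / 2) ^ 2 - 1 = ((l - l⁻¹) / 2) ^ 2 := by
    field_simp; ring
  rw [h2, Real.sqrt_sq (by nlinarith [mul_inv_cancel₀ (ne_of_gt hl0), inv_pos.mpr hl0])]
  congr 1
  field_simp
  ring

lemma dlb {p q : Hq × ℝ} {l : ℝ} (hl : 1 ≤ l) (hp : 0 < p.2) (hq : 0 < q.2)
    (h : (l + l⁻¹) / 2 ≤ Qd p q) : Real.log l ≤ hypDist5 p q := by
  have hl0 : 0 < l := by linarith
  have hQ1 : 1 ≤ Qd p q := Qd_one_le hp hq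
  rw [hypDist5_eq]
  have hs : (l - l⁻¹) / 2 ≤ Real.sqrt (Qd p q ^ 2 - 1) := by
    rw [show (l - l⁻¹)/2 = Real.sqrt (((l - l⁻¹)/2)^2) from
      (Real.sqrt_sq (by nlinarith [mul_inv_cancel₀ (ne_of_gt hl0), inv_pos.mpr hl0])).symm]
    apply Real.sqrt_le_sqrt
    nlinarith [mul_inv_cancel₀ (ne_of_gt hl0), inv_pos.mpr hl0, sq_nonneg (Qd p q - (l + l⁻¹)/2)]
  have : l ≤ Qd p q + Real.sqrt (Qd p q ^ 2 - 1) := by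
    have hinv : 0 < l⁻¹ := inv_pos.mpr hl0
    nlinarith
  exact Real.log_le_log hl0 this

/-- limit as the second point goes to a boundary point -/
lemma tendstoQ {ι : Type*} {l : Filter ι} (x : Hq × ℝ) (hx : 0 < x.2) (w : Hq)
    (f : ι → Hq × ℝ) (hf : Tendsto f l (nhds (w, 0)))
    (hf2 : ∀ᶠ n in l, 0 < (f n).2) :
    Tendsto (fun n => (f n).2 * Qd x (f n)) l (nhds (Bu x w / 2)) := by
  have hg : Continuous (fun y : Hq × ℝ =>
      y.2 + (‖x.1 - y.1‖ ^ 2 + (x.2 - y.2) ^ 2) / (2 * x.2)) := by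
    apply Continuous.add continuous_snd
    apply Continuous.div_const
    exact ((continuous_const.sub continuous_fst).norm.pow 2).add
      ((continuous_const.sub continuous_snd).pow 2)
  have hval : (fun y : Hq × ℝ =>
      y.2 + (‖x.1 - y.1‖ ^ 2 + (x.2 - y.2) ^ 2) / (2 * x.2)) (w, 0) = Bu x w / 2 := by
    simp only [Bu, sub_zero, zero_add, div_div]
    ring
  have h1 : Tendsto (fun n => (f n).2 + (‖x.1 - (f n).1‖ ^ 2 + (x.2 - (f n).2) ^ 2) / (2 * x.2))
      l (nhds (Bu x w / 2)) := by
    rw [← hval]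
    exact (hg.tendsto _).comp hf
  apply h1.congr'
  filter_upwards [hf2] with n hn
  have hx2 : x.2 ≠ 0 := ne_of_gt hx
  have hn2 : (f n).2 ≠ 0 := ne_of_gt hn
  simp only [Qd]
  field_simp

/-- the cocycle identity -/
lemma cocycle_lem (a b c d : Hq) (W : Hq → Hq) (hWdef : ∀ z, W z = (a*z+b)*(c*z+d)⁻¹)
    (Φ : Hq × ℝ → Hq × ℝ)
    (hpos : ∀ p : Hq × ℝ, 0 < p.2 → 0 < (Φ p).2)
    (hQiso : ∀ p q : Hq × ℝ, 0 < p.2 → 0 < q.2 → Qd (Φ p) (Φ q) = Qd p q)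
    (hbdry : ∀ z : Hq, c * z + d ≠ 0 →
      Filter.Tendsto (fun t : ℝ => Φ (z, t)) (nhdsWithin 0 (Set.Ioi 0))
        (nhds ((a * z + b) * (c * z + d)⁻¹, 0)))
    (p p' : Hq × ℝ) (hp : 0 < p.2) (hp' : 0 < p'.2) (z : Hq) (hz : c * z + d ≠ 0) :
    Bu (Φ p) (W z) * Bu p' z = Bu (Φ p') (W z) * Bu p z := by
  set l := nhdsWithin (0:ℝ) (Set.Ioi 0) with hl
  have hev : ∀ᶠ t : ℝ in l, 0 < t := self_mem_nhdsWithin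
  have hf : Tendsto (fun t : ℝ => Φ (z, t)) l (nhds (W z, 0)) := by
    rw [hWdef]; exact hbdry z hz
  have hf2 : ∀ᶠ t in l, 0 < (Φ (z, t)).2 := hev.mono (fun t ht => hpos _ ht)
  have hzt : Tendsto (fun t : ℝ => ((z, t) : Hq × ℝ)) l (nhds (z, 0)) :=
    ((continuous_const.prodMk continuous_id).tendsto 0).mono_left nhdsWithin_le_nhds
  have key : ∀ r : Hq × ℝ, 0 < r.2 →
      Tendsto (fun t : ℝ => (Φ (z, t)).2 / t) l (nhds (Bu (Φ r) (W z) / Bu r z)) := by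
    intro r hr
    have A1 : Tendsto (fun t => (Φ (z, t)).2 * Qd (Φ r) (Φ (z, t))) l
        (nhds (Bu (Φ r) (W z) / 2)) := tendstoQ (Φ r) (hpos r hr) (W z) _ hf hf2
    have A1' : Tendsto (fun t => (Φ (z, t)).2 * Qd r (z, t)) l
        (nhds (Bu (Φ r) (W z) / 2)) := by
      apply A1.congr'
      filter_upwards [hev] with t ht
      rw [hQiso r (z, t) hr ht]
    have A2 : Tendsto (fun t : ℝ => t * Qd r (z, t)) l (nhds (Bu r z / 2)) :=
      tendstoQ r hr z _ hzt hev
    have hB : Bu r z / 2 ≠ 0 := by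
      have := Bu_pos hr z; positivity
    have D := A1'.div A2 hB
    have hBz : Bu r z ≠ 0 := ne_of_gt (Bu_pos hr z)
    have hDval : (Bu (Φ r) (W z) / 2) / (Bu r z / 2) = Bu (Φ r) (W z) / Bu r z := by
      field_simp
    rw [hDval] at D
    apply D.congr'
    filter_upwards [hev] with t ht
    have hQ : Qd r (z, t) ≠ 0 := by
      have := Qd_one_le hr (show (0:ℝ) < ((z,t) : Hq × ℝ).2 from ht); linarith
    simp only [Pi.div_apply]
    rw [mul_div_mul_right _ _ hQ]
  have E1 := key p hp
  have E2 := key p' hp'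
  have heq := tendsto_nhds_unique E1 E2
  have h1 := Bu_pos hp z
  have h2 := Bu_pos hp' z
  field_simp at heq
  linarith [heq]

/-- limit ε → 0⁺ of ε² Bu x (g ε) when ‖g ε - winf‖ = κ/ε -/
lemma limA (x : Hq × ℝ) (hx : 0 < x.2) (g : ℝ → Hq) (winf : Hq) (κ : ℝ)
    (hg : ∀ ε : ℝ, 0 < ε → ‖g ε - winf‖ = κ / ε) :
    Tendsto (fun ε : ℝ => ε ^ 2 * Bu x (g ε)) (nhdsWithin 0 (Set.Ioi 0))
      (nhds (κ ^ 2 / x.2)) := by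
  set l := nhdsWithin (0:ℝ) (Set.Ioi 0) with hl
  have hev : ∀ᶠ ε : ℝ in l, 0 < ε := self_mem_nhdsWithin
  have hid : Tendsto (fun ε : ℝ => ε) l (nhds 0) :=
    tendsto_id.mono_left nhdsWithin_le_nhds
  have key : Tendsto (fun ε : ℝ => ε * ‖x.1 - g ε‖) l (nhds κ) := by
    have hz : Tendsto (fun ε : ℝ => ε * ‖x.1 - g ε‖ - κ) l (nhds 0) := by
      have hbnd : ∀ᶠ ε : ℝ in l, ‖ε * ‖x.1 - g ε‖ - κ‖ ≤ ε * ‖x.1 - winf‖ := by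
        filter_upwards [hev] with ε hε
        have h1 : |‖x.1 - g ε‖ - ‖winf - g ε‖| ≤ ‖x.1 - winf‖ := by
          have := abs_norm_sub_norm_le (x.1 - g ε) (winf - g ε)
          simpa using this
        have h2 : ‖winf - g ε‖ = κ / ε := by rw [norm_sub_rev]; exact hg ε hε
        have h3 : ε * ‖x.1 - g ε‖ - κ = ε * (‖x.1 - g ε‖ - ‖winf - g ε‖) := by
          rw [h2]; field_simp
        rw [Real.norm_eq_abs, h3, abs_mul, abs_of_pos hε]
        exact mul_le_mul_of_nonneg_left h1 (le_of_lt hε)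
      have hg0 : Tendsto (fun ε : ℝ => ε * ‖x.1 - winf‖) l (nhds 0) := by
        have := hid.mul_const ‖x.1 - winf‖
        simpa using this
      exact squeeze_zero_norm' hbnd hg0
    have := hz.add_const κ
    simpa using this
  have hmain : Tendsto (fun ε : ℝ => ((ε * ‖x.1 - g ε‖) ^ 2 + ε ^ 2 * x.2 ^ 2) / x.2) l
      (nhds ((κ ^ 2 + 0) / x.2)) := by
    apply Tendsto.div_const
    apply Tendsto.add
    · have := key.mul key
      have h2 : Tendsto (fun ε : ℝ => (ε * ‖x.1 - g ε‖) ^ 2) l (nhds (κ * κ)) := by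
        apply this.congr; intro ε; ring
      convert h2 using 2; ring
    · have := (hid.mul hid).mul_const (x.2 ^ 2)
      have h2 : Tendsto (fun ε : ℝ => ε ^ 2 * x.2 ^ 2) l (nhds (0 * 0 * x.2 ^ 2)) := by
        apply this.congr; intro ε; ring
      convert h2 using 2; ring
  rw [show (κ ^ 2 + 0) / x.2 = κ ^ 2 / x.2 by ring] at hmain
  apply hmain.congr
  intro ε
  rw [Bu]
  have hx2 : x.2 ≠ 0 := ne_of_gt hx
  field_simp

/-- continuity limit: Bu x (g R) → Bu x winf as R → ∞ when ‖g R - winf‖ = κ/R -/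
lemma limB1 (x : Hq × ℝ) (g : ℝ → Hq) (winf : Hq) (κ : ℝ)
    (hg : ∀ R : ℝ, 0 < R → ‖g R - winf‖ = κ / R) :
    Tendsto (fun R : ℝ => Bu x (g R)) atTop (nhds (Bu x winf)) := by
  have hgt : Tendsto g atTop (nhds winf) := by
    rw [tendsto_iff_norm_sub_tendsto_zero]
    have h0 : Tendsto (fun R : ℝ => κ / R) atTop (nhds 0) :=
      tendsto_const_nhds.div_atTop tendsto_id
    apply h0.congr'
    filter_upwards [eventually_gt_atTop (0:ℝ)] with R hR
    exact (hg R hR).symm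
  have hc : Continuous (fun w : Hq => Bu x w) := by
    apply Continuous.div_const
    exact ((continuous_const.sub continuous_id).norm.pow 2).add continuous_const
  exact (hc.tendsto winf).comp hgt

/-- Bu q (z₀ + R) / R² → 1/q₂ -/
lemma limB2 (q : Hq × ℝ) (hq : 0 < q.2) (z₀ : Hq) :
    Tendsto (fun R : ℝ => Bu q (z₀ + (R : Hq)) / R ^ 2) atTop (nhds (1 / q.2)) := by
  have hinv : Tendsto (fun R : ℝ => R⁻¹) atTop (nhds 0) := tendsto_inv_atTop_zero
  have key : Tendsto (fun R : ℝ => ‖q.1 - (z₀ + (R : Hq))‖ / R) atTop (nhds 1) := by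
    have hz : Tendsto (fun R : ℝ => ‖q.1 - (z₀ + (R : Hq))‖ / R - 1) atTop (nhds 0) := by
      have hbnd : ∀ᶠ R : ℝ in atTop, ‖‖q.1 - (z₀ + (R:Hq))‖ / R - 1‖ ≤ ‖q.1 - z₀‖ / R := by
        filter_upwards [eventually_gt_atTop (0:ℝ)] with R hR
        have h1 : |‖(q.1 - z₀) - (R:Hq)‖ - ‖(R:Hq)‖| ≤ ‖q.1 - z₀‖ := by
          have := abs_norm_sub_norm_le ((q.1 - z₀) - (R:Hq)) (-(R:Hq))
          simpa using this
        have hnR : ‖(R:Hq)‖ = R := by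
          rw [Quaternion.norm_coe]; exact abs_of_pos hR
        have h3 : ‖q.1 - (z₀ + (R:Hq))‖ / R - 1 = (‖(q.1 - z₀) - (R:Hq)‖ - ‖(R:Hq)‖) / R := by
          rw [hnR, sub_div, div_self (ne_of_gt hR), sub_add_eq_sub_sub]
        rw [Real.norm_eq_abs, h3, abs_div, abs_of_pos hR]
        exact div_le_div_of_nonneg_right h1 hR.le
      have hg0 : Tendsto (fun R : ℝ => ‖q.1 - z₀‖ / R) atTop (nhds 0) :=
        tendsto_const_nhds.div_atTop tendsto_id
      exact squeeze_zero_norm' hbnd hg0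
    have := hz.add_const 1
    simpa using this
  have hmain : Tendsto (fun R : ℝ => ((‖q.1 - (z₀ + (R:Hq))‖ / R) ^ 2 + (q.2 * R⁻¹) ^ 2) / q.2)
      atTop (nhds ((1 ^ 2 + (q.2 * 0) ^ 2) / q.2)) :=
    (((key.pow 2).add ((hinv.const_mul q.2).pow 2)).div_const q.2)
  rw [show ((1:ℝ) ^ 2 + (q.2 * 0) ^ 2) / q.2 = 1 / q.2 by ring] at hmain
  apply hmain.congr'
  filter_upwards [eventually_gt_atTop (0:ℝ)] with R hR
  have hR2 : R ≠ 0 := ne_of_gt hR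
  have hq2 : q.2 ≠ 0 := ne_of_gt hq
  rw [Bu, div_div]
  rw [div_eq_div_iff hq2 (by positivity)]
  field_simp

set_option maxHeartbeats 2000000 in
/-- Lemma 6.7: let `g = [[a,b],[c,d]] ∈ SL₂(ℍ)` with `c ≠ 0`, acting on `ℍ⁵_ℝ` by the
Poincaré extension `Φ` of its boundary action `z ↦ (az+b)(cz+d)⁻¹`, and let `s > 0` be
such that the horoball `H_s = {(z,t) | t ≥ s}` and `Φ(H_s)` have disjoint interiors.
Then the hyperbolic distance between `H_s` and `Φ(H_s)` equals `2 log|c| + 2 log s`. -/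
theorem stmt_18 (a b c d : Hq) (hc : c ≠ 0)
    (hdet : (a ≠ 0 ∧ ‖a * d - a * c * a⁻¹ * b‖ = 1) ∨ ‖c * b - c * a * c⁻¹ * d‖ = 1)
    (Φ : Hq × ℝ → Hq × ℝ)
    (hpos : ∀ p : Hq × ℝ, 0 < p.2 → 0 < (Φ p).2)
    (hisom : ∀ p q : Hq × ℝ, 0 < p.2 → 0 < q.2 → hypDist5 (Φ p) (Φ q) = hypDist5 p q)
    (hbdry : ∀ z : Hq, c * z + d ≠ 0 →
      Filter.Tendsto (fun t : ℝ => Φ (z, t)) (nhdsWithin 0 (Set.Ioi 0))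
        (nhds ((a * z + b) * (c * z + d)⁻¹, 0)))
    (s : ℝ) (hs : 0 < s)
    (hdisj : Disjoint {p : Hq × ℝ | s < p.2} (Φ '' {p : Hq × ℝ | s < p.2})) :
    sInf (Set.image2 hypDist5 {p : Hq × ℝ | s ≤ p.2} (Φ '' {p : Hq × ℝ | s ≤ p.2})) =
      2 * Real.log ‖c‖ + 2 * Real.log s := by
  classical
  set z₀ : Hq := -(c⁻¹ * d) with hz₀def
  set winf : Hq := a * c⁻¹ with hwinfdef
  set W : Hq → Hq := fun z => (a * z + b) * (c * z + d)⁻¹ with hWdef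
  have hcn : (0:ℝ) < ‖c‖ := norm_pos_iff.mpr hc
  have hfac : ∀ z : Hq, c * z + d = c * (z - z₀) := by
    intro z
    rw [hz₀def, sub_neg_eq_add, mul_add, ← mul_assoc, mul_inv_cancel₀ hc, one_mul]
  have hne : ∀ z : Hq, z ≠ z₀ → c * z + d ≠ 0 := by
    intro z hzz
    rw [hfac]
    exact mul_ne_zero hc (sub_ne_zero.mpr hzz)
  -- norm of the "determinant" entry
  have hδ : ‖b - a * c⁻¹ * d‖ = ‖c‖⁻¹ := by
    have key : ‖c‖ * ‖b - a * c⁻¹ * d‖ = 1 := by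
      rcases hdet with ⟨ha, h1⟩ | h2
      · have e2 : (a * c * a⁻¹) * (a * c⁻¹ * d) = a * d := by
          simp only [mul_assoc]
          rw [inv_mul_cancel_left₀ ha, mul_inv_cancel_left₀ hc]
        have e1 : a * d - a * c * a⁻¹ * b = -((a * c * a⁻¹) * (b - a * c⁻¹ * d)) := by
          rw [mul_sub, e2, neg_sub]
        rw [e1, norm_neg, norm_mul, norm_mul, norm_mul, norm_inv] at h1
        have han : (0:ℝ) < ‖a‖ := norm_pos_iff.mpr ha
        have : ‖a‖ * ‖c‖ * ‖a‖⁻¹ = ‖c‖ := by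
          field_simp
        rw [this] at h1
        exact h1
      · have e : c * b - c * a * c⁻¹ * d = c * (b - a * c⁻¹ * d) := by
          rw [mul_sub]
          simp only [mul_assoc]
        rw [e, norm_mul] at h2
        exact h2
    field_simp at key ⊢
    linear_combination key
  have hWnorm : ∀ z : Hq, z ≠ z₀ → ‖W z - winf‖ = ‖c‖⁻¹ ^ 2 / ‖z - z₀‖ := by
    intro z hzz
    have hcz : c * z + d ≠ 0 := hne z hzz
    have e1 : W z - winf = (b - a * c⁻¹ * d) * (c * z + d)⁻¹ := by
      rw [hWdef, hwinfdef]
      simp only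
      rw [eq_mul_inv_iff_mul_eq₀ hcz, sub_mul, inv_mul_cancel_right₀ hcz]
      have e2 : (a * c⁻¹) * (c * z + d) = a * z + a * c⁻¹ * d := by
        rw [mul_add]
        congr 1
        simp only [mul_assoc]
        rw [inv_mul_cancel_left₀ hc]
      rw [e2]
      abel
    rw [e1, norm_mul, norm_inv, hδ, hfac z, norm_mul, mul_inv]
    rw [div_eq_mul_inv]
    ring
  have Qiso : ∀ p q : Hq × ℝ, 0 < p.2 → 0 < q.2 → Qd (Φ p) (Φ q) = Qd p q :=
    fun p q hp hq => Qd_eq_of_d_eq (hpos p hp) (hpos q hq) hp hq (hisom p q hp hq)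
  have coc := cocycle_lem a b c d W (fun z => by rw [hWdef]) Φ hpos Qiso hbdry
  -- the key norm identity for points z₀ + ε
  have hcoeK : (0:ℝ) < ‖c‖⁻¹ ^ 2 := by positivity
  have hznz : ∀ ε : ℝ, 0 < ε → z₀ + (ε : Hq) ≠ z₀ := by
    intro ε hε h
    have h2 : (ε : Hq) = 0 := add_eq_left.mp h
    have h3 : ‖(ε : Hq)‖ = 0 := by rw [h2, norm_zero]
    rw [Quaternion.norm_coe, Real.norm_eq_abs, abs_of_pos hε] at h3
    exact (ne_of_gt hε) h3
  have hgW : ∀ ε : ℝ, 0 < ε → ‖W (z₀ + (ε : Hq)) - winf‖ = ‖c‖⁻¹ ^ 2 / ε := by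
    intro ε hε
    rw [hWnorm _ (hznz ε hε)]
    congr 1
    rw [add_sub_cancel_left, Quaternion.norm_coe]
    exact abs_of_pos hε
  have hBvert : ∀ tt ε : ℝ, 0 < tt → Bu ((z₀, tt) : Hq × ℝ) (z₀ + (ε : Hq)) = (ε ^ 2 + tt ^ 2) / tt := by
    intro tt ε htt
    rw [Bu]
    have h1 : (((z₀, tt) : Hq × ℝ)).1 - (z₀ + (ε : Hq)) = -(ε : Hq) := by
      simp
    rw [h1, norm_neg, Quaternion.norm_coe, Real.norm_eq_abs, sq_abs]
  -- the heights of Φ on the vertical line above z₀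
  set K := (Φ ((z₀ : Hq), (1:ℝ))).2 with hKdef
  have hK0 : 0 < K := hpos _ one_pos
  have hstep1 : ∀ t : ℝ, 0 < t → (Φ (z₀, t)).2 = K / t := by
    intro t ht
    have hΦt := hpos (z₀, t) ht
    have l1t := limA (Φ (z₀, t)) hΦt (fun ε => W (z₀ + (ε : Hq))) winf (‖c‖⁻¹ ^ 2) hgW
    have l11 := limA (Φ (z₀, 1)) hK0 (fun ε => W (z₀ + (ε : Hq))) winf (‖c‖⁻¹ ^ 2) hgW
    have hpoly1 : Tendsto (fun ε : ℝ => ε ^ 2 + 1) (nhdsWithin 0 (Set.Ioi 0)) (nhds 1) := by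
      have : Tendsto (fun ε : ℝ => ε ^ 2 + 1) (nhds 0) (nhds ((0:ℝ) ^ 2 + 1)) :=
        ((continuous_pow 2).add continuous_const).tendsto 0
      simpa using this.mono_left nhdsWithin_le_nhds
    have hpolyt : Tendsto (fun ε : ℝ => (ε ^ 2 + t ^ 2) / t) (nhdsWithin 0 (Set.Ioi 0))
        (nhds t) := by
      have : Tendsto (fun ε : ℝ => (ε ^ 2 + t ^ 2) / t) (nhds 0)
          (nhds (((0:ℝ) ^ 2 + t ^ 2) / t)) :=
        (((continuous_pow 2).add continuous_const).div_const t).tendsto 0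
      have h2 : ((0:ℝ) ^ 2 + t ^ 2) / t = t := by
        field_simp
        ring
      rw [h2] at this
      exact this.mono_left nhdsWithin_le_nhds
    have L := l1t.mul hpoly1
    have Rr := l11.mul hpolyt
    have hEq : (fun ε : ℝ => (ε ^ 2 * Bu (Φ (z₀, t)) (W (z₀ + (ε : Hq)))) * (ε ^ 2 + 1))
        =ᶠ[nhdsWithin 0 (Set.Ioi 0)]
        (fun ε : ℝ => (ε ^ 2 * Bu (Φ (z₀, 1)) (W (z₀ + (ε : Hq)))) * ((ε ^ 2 + t ^ 2) / t)) := by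
      filter_upwards [self_mem_nhdsWithin] with ε hε
      have hε' : (0:ℝ) < ε := hε
      have hco := coc (z₀, t) (z₀, 1) ht one_pos (z₀ + (ε : Hq)) (hne _ (hznz ε hε'))
      rw [hBvert 1 ε one_pos, hBvert t ε ht] at hco
      have h1 : (ε ^ 2 + 1 ^ 2) / 1 = ε ^ 2 + 1 := by ring
      rw [h1] at hco
      linear_combination ε ^ 2 * hco
    have huniq := tendsto_nhds_unique (L.congr' hEq) Rr
    -- huniq : (κ²/h_t) * 1 = (κ²/K) * t
    have hκne : (‖c‖⁻¹ ^ 2 : ℝ) ≠ 0 := ne_of_gt hcoeK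
    have hhtne : (Φ (z₀, t)).2 ≠ 0 := ne_of_gt hΦt
    rw [eq_div_iff (ne_of_gt ht)]
    field_simp at huniq
    have h3 : (‖c‖ ^ 2) ^ 2 * (Φ (z₀, 1)).2 = (‖c‖ ^ 2) ^ 2 * (t * (Φ (z₀, t)).2) := by
      rw [eq_div_iff (ne_of_gt (hpos (z₀, 1) one_pos))] at huniq
      linear_combination (‖c‖ ^ 2) ^ 2 * huniq
    have h4 := mul_left_cancel₀ (by positivity : ((‖c‖ ^ 2) ^ 2 : ℝ) ≠ 0) h3
    rw [hKdef]
    linarith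
  -- Busemann values at winf on the vertical line
  have hstep3 : ∀ t : ℝ, 0 < t → Bu (Φ (z₀, t)) winf = Bu (Φ (z₀, 1)) winf / t := by
    intro t ht
    have hΦt := hpos (z₀, t) ht
    have lBt := limB1 (Φ (z₀, t)) (fun R => W (z₀ + (R : Hq))) winf (‖c‖⁻¹ ^ 2) hgW
    have lB1 := limB1 (Φ (z₀, 1)) (fun R => W (z₀ + (R : Hq))) winf (‖c‖⁻¹ ^ 2) hgW
    have hinv2 : Tendsto (fun R : ℝ => (R ^ 2)⁻¹) atTop (nhds 0) :=
      (tendsto_pow_atTop two_ne_zero).inv_tendsto_atTop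
    have hfac1 : Tendsto (fun R : ℝ => (R ^ 2 + 1) / R ^ 2) atTop (nhds 1) := by
      have h1 : Tendsto (fun R : ℝ => 1 + (R ^ 2)⁻¹) atTop (nhds (1 + 0)) :=
        tendsto_const_nhds.add hinv2
      rw [add_zero] at h1
      apply h1.congr'
      filter_upwards [eventually_gt_atTop (0:ℝ)] with R hR
      have : R ^ 2 ≠ 0 := by positivity
      field_simp
    have hfact : Tendsto (fun R : ℝ => (R ^ 2 + t ^ 2) / (t * R ^ 2)) atTop (nhds (1 / t)) := by
      have h1 : Tendsto (fun R : ℝ => 1 / t + t * (R ^ 2)⁻¹) atTop (nhds (1 / t + t * 0)) :=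
        tendsto_const_nhds.add (hinv2.const_mul t)
      rw [mul_zero, add_zero] at h1
      apply h1.congr'
      filter_upwards [eventually_gt_atTop (0:ℝ)] with R hR
      have hR2 : R ^ 2 ≠ 0 := by positivity
      field_simp
    have L := lBt.mul hfac1
    have Rr := lB1.mul hfact
    have hEq : (fun R : ℝ => Bu (Φ (z₀, t)) (W (z₀ + (R : Hq))) * ((R ^ 2 + 1) / R ^ 2))
        =ᶠ[atTop]
        (fun R : ℝ => Bu (Φ (z₀, 1)) (W (z₀ + (R : Hq))) * ((R ^ 2 + t ^ 2) / (t * R ^ 2))) := by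
      filter_upwards [eventually_gt_atTop (0:ℝ)] with R hR
      have hco := coc (z₀, t) (z₀, 1) ht one_pos (z₀ + (R : Hq)) (hne _ (hznz R hR))
      rw [hBvert 1 R one_pos, hBvert t R ht] at hco
      have h1 : (R ^ 2 + 1 ^ 2) / 1 = R ^ 2 + 1 := by ring
      rw [h1] at hco
      linear_combination (R ^ 2)⁻¹ * hco
    have huniq := tendsto_nhds_unique (L.congr' hEq) Rr
    -- huniq : Bu x_t winf * 1 = Bu x_1 winf * (1/t)
    rw [mul_one] at huniq
    rw [huniq, mul_one_div]
  -- first coordinates on the vertical line are all equal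
  have hstep2 : ∀ t : ℝ, 0 < t → (Φ (z₀, t)).1 = (Φ (z₀, 1)).1 := by
    intro t ht
    have hΦt := hpos (z₀, t) ht
    have hQ := Qiso (z₀, t) (z₀, 1) ht one_pos
    rw [Qd, Qd] at hQ
    have hz00 : (((z₀, t) : Hq × ℝ)).1 - (((z₀, 1) : Hq × ℝ)).1 = 0 := sub_self z₀
    rw [hz00, norm_zero] at hQ
    have ht2 : (Φ (z₀, t)).2 = K / t := hstep1 t ht
    have h12 : (Φ (z₀, 1)).2 = K := by rw [hstep1 1 one_pos, div_one]
    rw [ht2, h12] at hQ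
    have hsimp : (((z₀, t) : Hq × ℝ)).2 = t := rfl
    have hsimp1 : (((z₀, 1) : Hq × ℝ)).2 = (1:ℝ) := rfl
    rw [hsimp, hsimp1] at hQ
    have hKt : (0:ℝ) < K / t := by positivity
    have hn : ‖(Φ (z₀, t)).1 - (Φ (z₀, 1)).1‖ ^ 2 = 0 := by
      have hne1 : K / t ≠ 0 := ne_of_gt hKt
      field_simp at hQ
      have hz1 : ‖(Φ (z₀, t)).1 - (Φ (z₀, 1)).1‖ ^ 2 * (2 * t ^ 4) = 0 := by
        linear_combination (2 * t ^ 2) * hQ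
      have h2t : (0:ℝ) < 2 * t ^ 4 := by positivity
      rcases mul_eq_zero.mp hz1 with h | h
      · exact h
      · exact absurd h (ne_of_gt h2t)
    have := (pow_eq_zero_iff two_ne_zero).mp hn
    rw [norm_eq_zero, sub_eq_zero] at this
    exact this
  -- the common first coordinate is winf
  have hu1 : (Φ (z₀, 1)).1 = winf := by
    have h2 := hstep3 2 two_pos
    rw [Bu, Bu, hstep2 2 two_pos, hstep1 2 two_pos] at h2
    have h12 : (Φ (z₀, 1)).2 = K := by rw [hstep1 1 one_pos, div_one]
    rw [h12] at h2
    have hE : ‖(Φ (z₀, 1)).1 - winf‖ ^ 2 = 0 := by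
      have hK2 : (0:ℝ) < K / 2 := by positivity
      field_simp at h2
      nlinarith [h2, hK0]
      
    have := (pow_eq_zero_iff two_ne_zero).mp hE
    rw [norm_eq_zero, sub_eq_zero] at this
    exact this
  have hxval : ∀ t : ℝ, 0 < t → Φ (z₀, t) = ((winf, K / t) : Hq × ℝ) := by
    intro t ht
    have h1 := (hstep2 t ht).trans hu1
    have h2 := hstep1 t ht
    exact Prod.ext h1 h2
  -- determine K
  have hρ : K = ‖c‖⁻¹ ^ 2 := by
    have hco := coc (z₀, 1) (z₀, 2) one_pos two_pos (z₀ + ((1:ℝ) : Hq)) (hne _ (hznz 1 one_pos))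
    rw [hxval 1 one_pos, hxval 2 two_pos] at hco
    rw [hBvert 1 1 one_pos, hBvert 2 1 two_pos] at hco
    have hWv : ‖W (z₀ + ((1:ℝ) : Hq)) - winf‖ = ‖c‖⁻¹ ^ 2 := by
      rw [hgW 1 one_pos, div_one]
    rw [Bu, Bu] at hco
    have e1 : (((winf, K / 1) : Hq × ℝ)).1 - W (z₀ + ((1:ℝ) : Hq)) =
        -(W (z₀ + ((1:ℝ) : Hq)) - winf) := by simp
    have e2 : (((winf, K / 2) : Hq × ℝ)).1 - W (z₀ + ((1:ℝ) : Hq)) =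
        -(W (z₀ + ((1:ℝ) : Hq)) - winf) := by simp
    rw [e1, norm_neg, hWv] at hco
    have e3 : (((winf, K / 1) : Hq × ℝ)).2 = K / 1 := rfl
    have e4 : (((winf, K / 2) : Hq × ℝ)).2 = K / 2 := rfl
    rw [e3, e4] at hco
    set ρ := ‖c‖⁻¹ ^ 2 with hρdef
    have hρ0 : 0 < ρ := hcoeK
    have hKne : K ≠ 0 := ne_of_gt hK0
    field_simp at hco
    have hKsq : (K - ρ) * ((K + ρ) * (12 * K)) = 0 := by linear_combination (4 * K) * hco
    rcases mul_eq_zero.mp hKsq with h | h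
    · linarith [sub_eq_zero.mp h]
    · exfalso
      rcases mul_eq_zero.mp h with h2 | h2
      · nlinarith [hK0, hρ0]
      · nlinarith [hK0]
  -- upper bound on heights over the horoball
  have hub : ∀ q : Hq × ℝ, 0 < q.2 → (Φ q).2 ≤ K / q.2 := by
    intro q hq
    have hΦq := hpos q hq
    have lB1 : Tendsto (fun R : ℝ => Bu ((winf, K) : Hq × ℝ) (W (z₀ + (R : Hq)))) atTop
        (nhds (Bu ((winf, K) : Hq × ℝ) winf)) := limB1 _ _ _ _ hgW
    have hBv : Bu ((winf, K) : Hq × ℝ) winf = K := by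
      rw [Bu]
      have h1 : (((winf, K) : Hq × ℝ)).1 - winf = 0 := sub_self winf
      rw [h1, norm_zero]
      have hKne : K ≠ 0 := ne_of_gt hK0
      field_simp
      ring
    rw [hBv] at lB1
    have lB2' := limB2 q hq z₀
    have hinv2 : Tendsto (fun R : ℝ => (R ^ 2)⁻¹) atTop (nhds 0) :=
      (tendsto_pow_atTop two_ne_zero).inv_tendsto_atTop
    have lfrac : Tendsto (fun R : ℝ => R ^ 2 / (R ^ 2 + 1)) atTop (nhds 1) := by
      have h1 : Tendsto (fun R : ℝ => ((R ^ 2 + 1) / R ^ 2)⁻¹) atTop (nhds 1⁻¹) := by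
        apply Filter.Tendsto.inv₀ _ one_ne_zero
        have h2 : Tendsto (fun R : ℝ => 1 + (R ^ 2)⁻¹) atTop (nhds (1 + 0)) :=
          tendsto_const_nhds.add hinv2
        rw [add_zero] at h2
        apply h2.congr'
        filter_upwards [eventually_gt_atTop (0:ℝ)] with R hR
        have : R ^ 2 ≠ 0 := by positivity
        field_simp
      rw [inv_one] at h1
      apply h1.congr'
      filter_upwards [eventually_gt_atTop (0:ℝ)] with R hR
      have : R ^ 2 ≠ 0 := by positivity
      rw [inv_div]
    have lmain := (lB1.mul lB2').mul lfrac
    have hval2 : K * (1 / q.2) * 1 = K / q.2 := by ring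
    rw [hval2] at lmain
    apply ge_of_tendsto lmain
    filter_upwards [eventually_gt_atTop (0:ℝ)] with R hR
    have hco := coc q (z₀, 1) hq one_pos (z₀ + (R : Hq)) (hne _ (hznz R hR))
    rw [hxval 1 one_pos, hBvert 1 R one_pos] at hco
    have hKd1 : ((winf, K / 1) : Hq × ℝ) = ((winf, K) : Hq × ℝ) := by rw [div_one]
    rw [hKd1] at hco
    have hge := Bu_ge hΦq (W (z₀ + (R : Hq)))
    have hR2 : (R:ℝ) ^ 2 ≠ 0 := by positivity
    have hR1 : (0:ℝ) < R ^ 2 + 1 := by positivity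
    have hco' : Bu (Φ q) (W (z₀ + (R:Hq))) * (R ^ 2 + 1) =
        Bu ((winf, K) : Hq × ℝ) (W (z₀ + (R:Hq))) * Bu q (z₀ + (R:Hq)) := by
      linear_combination hco
    have heq2 : Bu (Φ q) (W (z₀ + (R:Hq))) =
        Bu ((winf, K) : Hq × ℝ) (W (z₀ + (R:Hq))) * (Bu q (z₀ + (R:Hq)) / R ^ 2) *
          (R ^ 2 / (R ^ 2 + 1)) := by
      have e5 : Bu ((winf, K) : Hq × ℝ) (W (z₀ + (R:Hq))) * (Bu q (z₀ + (R:Hq)) / R ^ 2) *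
          (R ^ 2 / (R ^ 2 + 1)) =
          Bu ((winf, K) : Hq × ℝ) (W (z₀ + (R:Hq))) * Bu q (z₀ + (R:Hq)) / (R ^ 2 + 1) := by
        field_simp
      rw [e5, eq_div_iff (ne_of_gt hR1)]
      linear_combination hco'
    linarith [hge, heq2]
  -- disjointness forces K ≤ s²
  have hKs : K ≤ s ^ 2 := by
    have hKstep : ∀ s' : ℝ, s < s' → K / s' ≤ s := by
      intro s' hs'
      have hmem : Φ (z₀, s') ∈ Φ '' {p : Hq × ℝ | s < p.2} := ⟨(z₀, s'), hs', rfl⟩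
      have hnot : Φ (z₀, s') ∉ {p : Hq × ℝ | s < p.2} := Set.disjoint_right.mp hdisj hmem
      have h2 : ¬ s < (Φ (z₀, s')).2 := hnot
      rw [hstep1 s' (lt_trans hs hs')] at h2
      linarith [not_lt.mp h2]
    by_contra hcon
    push_neg at hcon
    have h1 : s < K / s := by rw [lt_div_iff₀ hs]; nlinarith
    have h2 : s < (s + K / s) / 2 := by linarith
    have h3 := hKstep ((s + K / s) / 2) h2
    have hs'0 : 0 < (s + K / s) / 2 := lt_trans hs h2
    rw [div_le_iff₀ hs'0] at h3
    have h4 : s * (K / s) = K := mul_div_cancel₀ K (ne_of_gt hs)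
    nlinarith [h3, h4, hcon]
  have hlam : 1 ≤ s ^ 2 / K := (one_le_div hK0).mpr hKs
  -- the realized distance value
  have hval : hypDist5 ((winf, s) : Hq × ℝ) (Φ (z₀, s)) =
      2 * Real.log ‖c‖ + 2 * Real.log s := by
    rw [hxval s hs]
    have hQval : Qd ((winf, s) : Hq × ℝ) ((winf, K / s) : Hq × ℝ) =
        (s ^ 2 / K + (s ^ 2 / K)⁻¹) / 2 := by
      rw [Qd]
      have h1 : (((winf, s) : Hq × ℝ)).1 - (((winf, K / s) : Hq × ℝ)).1 = 0 := sub_self winf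
      rw [h1, norm_zero]
      have hKne : K ≠ 0 := ne_of_gt hK0
      have hsne : s ≠ 0 := ne_of_gt hs
      field_simp
      ring
    rw [dval hlam hQval]
    have hc2 : s ^ 2 / K = ‖c‖ ^ 2 * s ^ 2 := by
      rw [hρ]
      field_simp
    rw [hc2, Real.log_mul (pow_ne_zero 2 (ne_of_gt hcn)) (pow_ne_zero 2 (ne_of_gt hs)),
      Real.log_pow, Real.log_pow]
    push_cast
    ring
  -- lower bound for all distances between the horoballs
  have hlb : ∀ x ∈ Set.image2 hypDist5 {p : Hq × ℝ | s ≤ p.2} (Φ '' {p : Hq × ℝ | s ≤ p.2}),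
      2 * Real.log ‖c‖ + 2 * Real.log s ≤ x := by
    rintro x ⟨p, hp, q', ⟨q, hq, rfl⟩, rfl⟩
    have hp2 : s ≤ p.2 := hp
    have hq2 : s ≤ q.2 := hq
    have hq0 : 0 < q.2 := lt_of_lt_of_le hs hq2
    have hp0 : 0 < p.2 := lt_of_lt_of_le hs hp2
    have hΦq := hpos q hq0
    have hH : (Φ q).2 ≤ K / s := by
      refine le_trans (hub q hq0) ?_
      gcongr
    have f0 : (Φ q).2 * s ≤ K := (le_div_iff₀ hs).mp hH
    have hlog : 2 * Real.log ‖c‖ + 2 * Real.log s = Real.log (s ^ 2 / K) := by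
      have hc2 : s ^ 2 / K = ‖c‖ ^ 2 * s ^ 2 := by
        rw [hρ]; field_simp
      rw [hc2, Real.log_mul (pow_ne_zero 2 (ne_of_gt hcn)) (pow_ne_zero 2 (ne_of_gt hs)),
        Real.log_pow, Real.log_pow]
      push_cast
      ring
    rw [hlog]
    apply dlb hlam hp0 hΦq
    rw [Qd]
    set P := p.2 with hP
    set H := (Φ q).2 with hHdef
    have f1 : 0 ≤ P * K - H * s ^ 2 := by nlinarith [f0, hp2, hs, hΦq, hK0]
    have f2 : 0 ≤ P * s ^ 2 - H * K := by nlinarith [f0, hKs, hs, hK0, hp2, hΦq]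
    have e2 : (s ^ 2 / K + (s ^ 2 / K)⁻¹) / 2 = (s ^ 2 * s ^ 2 + K * K) / (2 * (K * s ^ 2)) := by
      have hKne : K ≠ 0 := ne_of_gt hK0
      have hsne : s ≠ 0 := ne_of_gt hs
      rw [inv_div]
      rw [div_add_div _ _ hKne (pow_ne_zero 2 hsne), div_div]
      congr 1
      ring
    have key : (s ^ 2 * s ^ 2 + K * K) / (2 * (K * s ^ 2)) ≤ (P ^ 2 + H ^ 2) / (2 * (P * H)) := by
      rw [div_le_div_iff₀ (by positivity) (by positivity)]
      nlinarith [mul_nonneg f1 f2]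
    have e1 : (P ^ 2 + H ^ 2) / (2 * (P * H)) = 1 + (P - H) ^ 2 / (2 * P * H) := by
      field_simp
      ring
    have e3 : (P - H) ^ 2 / (2 * P * H) ≤ (‖p.1 - (Φ q).1‖ ^ 2 + (P - H) ^ 2) / (2 * P * H) := by
      apply div_le_div_of_nonneg_right _ (by positivity)
      nlinarith [sq_nonneg ‖p.1 - (Φ q).1‖]
    linarith [e2, key, e1, e3]
  have hmem : 2 * Real.log ‖c‖ + 2 * Real.log s ∈
      Set.image2 hypDist5 {p : Hq × ℝ | s ≤ p.2} (Φ '' {p : Hq × ℝ | s ≤ p.2}) := by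
    rw [← hval]
    apply Set.mem_image2_of_mem
    · exact le_refl s
    · exact ⟨(z₀, s), le_refl s, rfl⟩
  exact le_antisymm (csInf_le ⟨_, fun x hx => hlb x hx⟩ hmem) (le_csInf ⟨_, hmem⟩ hlb)
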